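/- Fix 1 ≤ K ≤ M, 1 ≤ T ≤ 2M and 1 ≤ τ ≤ T, and let Θ'_{n,K,T,τ} = {θ ∈ Θ'_{n,K} : T(θ) = T and τ_n(θ) = τ}. Then almost surely, limsup_{n→∞} sup_{θ ∈ Θ'_{n,K,T,τ}} [ Σ_{t=τ+1}^{T} (1/n)·R_n(J_t(θ))·log H(J_t(θ)) − 3·Σ_{t=τ+1}^{T} (2/n)·log H(J_t(θ)) ] ≤ 0. -/

import Mathlib

/-!
A high interval `J_t` (one with `τ ≤ t`) has height `H > M / (2 c_n') ≥ 1`, so `log H ≥ 0`, and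
since `H · |J_t| ≤ ∫ f(·; θ) = 1` its length is at most `2 c_n' = 2 c₀ exp (-n ^ (1/4))`.
Cover a bounded window containing every `J_t` by `O(exp (n ^ (1/4)))` overlapping grid intervals
of twice that length: the chance that one of them holds seven of the first `n` observations is
`O(n ^ 7 exp (-6 n ^ (1/4)))`, which is summable. By Borel–Cantelli, almost surely, for all large
`n`, every high interval holds at most six observations, so `R_n(J_t)/n · log H ≤ 6/n · log H`
termwise and every element of the set, hence its supremum, is nonpositive.
-/

open MeasureTheory ProbabilityTheory Filter Set
open scoped Classical

/-- The uniform density with center `a` and half-width `b`, supported on `[a - b, a + b)`. -/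
noncomputable def unifPdf (a b x : ℝ) : ℝ :=
  if a - b ≤ x ∧ x < a + b then 1 / (2 * b) else 0

/-- Mixture of `M` uniform densities; `θ (m, 0)` is `α_m`, `θ (m, 1)` is `a_m`,
`θ (m, 2)` is `b_m`. -/
noncomputable def mixPdf (M : ℕ) (θ : EuclideanSpace ℝ (Fin M × Fin 3)) (x : ℝ) : ℝ :=
  ∑ m : Fin M, θ (m, 0) * unifPdf (θ (m, 1)) (θ (m, 2)) x

/-- The parameter space `Θ`. -/
def mixParams (M : ℕ) : Set (EuclideanSpace ℝ (Fin M × Fin 3)) :=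
  {θ | (∀ m, 0 ≤ θ (m, 0)) ∧ (∑ m : Fin M, θ (m, 0)) = 1 ∧ ∀ m, 0 < θ (m, 2)}

/-- `Θ_n' = {θ ∈ Θ : L_min ≤ a_m ≤ L_max, c_n ≤ b_m ≤ L for all m, b_m ≤ c₀ for some m}`. -/
def thetaN' (M : ℕ) (Lmin Lmax L c₀ cn : ℝ) : Set (EuclideanSpace ℝ (Fin M × Fin 3)) :=
  {θ ∈ mixParams M |
    (∀ m : Fin M, Lmin ≤ θ (m, 1) ∧ θ (m, 1) ≤ Lmax ∧ cn ≤ θ (m, 2) ∧ θ (m, 2) ≤ L) ∧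
    ∃ m : Fin M, θ (m, 2) ≤ c₀}

/-- `Θ'_{n,K} = {θ ∈ Θ_n' : b_1 ≤ … ≤ b_K ≤ c₀ < b_{K+1} ≤ … ≤ b_M}`. -/
def thetaNK (M : ℕ) (Lmin Lmax L c₀ cn : ℝ) (K : ℕ) :
    Set (EuclideanSpace ℝ (Fin M × Fin 3)) :=
  {θ ∈ thetaN' M Lmin Lmax L c₀ cn |
    (Monotone fun m : Fin M => θ (m, 2)) ∧
    ∀ m : Fin M, ((m : ℕ) < K → θ (m, 2) ≤ c₀) ∧ (K ≤ (m : ℕ) → c₀ < θ (m, 2))}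

/-- `R_n(V)`: the number of the first `n` observations lying in `V`. -/
noncomputable def countIn {Ω : Type*} (X : ℕ → Ω → ℝ) (ω : Ω) (n : ℕ) (V : Set ℝ) : ℕ :=
  ((Finset.range n).filter fun i => X i ω ∈ V).card

/-- A decomposition of the mixture density `f(·; θ)` as a step function
`f(x; θ) = Σ_{t=1}^T H(J_t(θ))·1_{J_t(θ)}(x)` with disjoint nonempty half-open
intervals `J_t = [l_t, r_t)` and nondecreasing positive heights `H_t`. -/
structure StepDecomp (M : ℕ) (θ : EuclideanSpace ℝ (Fin M × Fin 3)) (T : ℕ) where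
  l : Fin T → ℝ
  r : Fin T → ℝ
  H : Fin T → ℝ
  lt : ∀ t, l t < r t
  disj : ∀ t t', t ≠ t' → Disjoint (Set.Ico (l t) (r t)) (Set.Ico (l t') (r t'))
  Hpos : ∀ t, 0 < H t
  Hmono : Monotone H
  repr : ∀ x : ℝ, mixPdf M θ x
    = ∑ t : Fin T, H t * (Set.Ico (l t) (r t)).indicator 1 x

/-- `τ_n(θ) = τ`: the heights `H_t` are at most `M/(2c_n')` precisely for `t ≤ τ`
(in the one-based indexing of the paper, i.e. `t.val < τ` with zero-based `Fin`). -/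
def tauEq {M T : ℕ} {θ : EuclideanSpace ℝ (Fin M × Fin 3)}
    (D : StepDecomp M θ T) (cn' : ℝ) (τ : ℕ) : Prop :=
  ∀ t : Fin T, D.H t ≤ (M : ℝ) / (2 * cn') ↔ (t : ℕ) < τ

open scoped ENNReal

lemma unifPdf_nonneg (a : ℝ) {b : ℝ} (hb : 0 < b) (x : ℝ) : 0 ≤ unifPdf a b x := by
  unfold unifPdf; split <;> positivity

lemma mixPdf_nonneg {M : ℕ} {θ : EuclideanSpace ℝ (Fin M × Fin 3)} (hθ : θ ∈ mixParams M)
    (x : ℝ) : 0 ≤ mixPdf M θ x :=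
  Finset.sum_nonneg fun m _ => mul_nonneg (hθ.1 m) (unifPdf_nonneg _ (hθ.2.2 m) x)

lemma measurable_unifPdf (a b : ℝ) : Measurable (unifPdf a b) :=
  measurable_const.ite measurableSet_Ico measurable_const

lemma lintegral_ofReal_unifPdf (a : ℝ) {b : ℝ} (hb : 0 < b) :
    ∫⁻ x, ENNReal.ofReal (unifPdf a b x) = 1 := by
  have h : (fun x => ENNReal.ofReal (unifPdf a b x))
      = (Ico (a - b) (a + b)).indicator fun _ => ENNReal.ofReal (1 / (2 * b)) := by
    ext x
    simp only [unifPdf, Set.indicator, Set.mem_Ico]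
    split_ifs <;> simp
  rw [h, lintegral_indicator_const measurableSet_Ico, Real.volume_Ico,
    ← ENNReal.ofReal_mul (by positivity), ← ENNReal.ofReal_one]
  congr 1
  field_simp
  ring

lemma lintegral_ofReal_mixPdf {M : ℕ} {θ : EuclideanSpace ℝ (Fin M × Fin 3)}
    (hθ : θ ∈ mixParams M) : ∫⁻ x, ENNReal.ofReal (mixPdf M θ x) = 1 := by
  obtain ⟨hα, hsum, hb⟩ := hθ
  simp_rw [mixPdf, ENNReal.ofReal_sum_of_nonneg fun m _ =>
    mul_nonneg (hα m) (unifPdf_nonneg _ (hb m) _), ENNReal.ofReal_mul (hα _)]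
  rw [lintegral_finsetSum _ fun m _ => (measurable_unifPdf _ _).ennreal_ofReal.const_mul _]
  simp_rw [lintegral_const_mul _ (measurable_unifPdf _ _).ennreal_ofReal,
    lintegral_ofReal_unifPdf _ (hb _), mul_one]
  rw [← ENNReal.ofReal_sum_of_nonneg fun m _ => hα m, hsum, ENNReal.ofReal_one]

lemma mem_Ico_of_mixPdf_ne_zero {M : ℕ} {Lmin Lmax L c₀ cn x : ℝ}
    {θ : EuclideanSpace ℝ (Fin M × Fin 3)} (hθ : θ ∈ thetaN' M Lmin Lmax L c₀ cn)
    (hx : mixPdf M θ x ≠ 0) : x ∈ Ico (Lmin - L) (Lmax + L) := by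
  contrapose! hx
  refine Finset.sum_eq_zero fun m _ => ?_
  obtain ⟨ha₁, ha₂, -, hbL⟩ := hθ.2.1 m
  rw [unifPdf, if_neg fun h => hx ⟨by linarith [h.1], by linarith [h.2]⟩, mul_zero]

namespace StepDecomp

variable {M T : ℕ} {θ : EuclideanSpace ℝ (Fin M × Fin 3)} (D : StepDecomp M θ T)

lemma mixPdf_eq {t : Fin T} {x : ℝ} (hx : x ∈ Ico (D.l t) (D.r t)) : mixPdf M θ x = D.H t := by
  rw [D.repr x, Finset.sum_eq_single t]
  · simp [Set.indicator_of_mem hx]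
  · intro t' _ hne
    simp [Set.indicator_of_notMem fun hx' => Set.disjoint_left.mp (D.disj t' t hne) hx' hx]
  · simp

lemma Ico_subset {Lmin Lmax L c₀ cn : ℝ} (hθ : θ ∈ thetaN' M Lmin Lmax L c₀ cn) (t : Fin T) :
    Ico (D.l t) (D.r t) ⊆ Ico (Lmin - L) (Lmax + L) := fun _ hx =>
  mem_Ico_of_mixPdf_ne_zero hθ ((D.mixPdf_eq hx).trans_ne (D.Hpos t).ne')

lemma H_mul_length_le_one (hθ : θ ∈ mixParams M) (t : Fin T) : D.H t * (D.r t - D.l t) ≤ 1 := by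
  have h : ENNReal.ofReal (D.H t) * volume (Ico (D.l t) (D.r t)) ≤ 1 := by
    rw [← lintegral_ofReal_mixPdf hθ, ← lintegral_indicator_const measurableSet_Ico]
    refine lintegral_mono fun x => ?_
    by_cases hx : x ∈ Ico (D.l t) (D.r t)
    · rw [Set.indicator_of_mem hx, D.mixPdf_eq hx]
    · simp [Set.indicator_of_notMem hx]
  rwa [Real.volume_Ico, ← ENNReal.ofReal_mul (D.Hpos t).le, ENNReal.ofReal_le_one] at h

lemma length_lt_inv_of_lt_H (hθ : θ ∈ mixParams M) {t : Fin T} {h : ℝ} (hh : 0 < h)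
    (hH : h < D.H t) : D.r t - D.l t < h⁻¹ := by
  rw [lt_inv_comm₀ (sub_pos.2 (D.lt t)) hh]
  calc h < D.H t := hH
    _ ≤ (D.r t - D.l t)⁻¹ := by
      rw [le_inv_comm₀ (D.Hpos t) (sub_pos.2 (D.lt t)), inv_eq_one_div, le_div_iff₀ (D.Hpos t)]
      linarith [D.H_mul_length_le_one hθ t]

lemma countIn_div_mul_log_le {Ω : Type*} {X : ℕ → Ω → ℝ} {ω : Ω} {n : ℕ}
    {Lmin Lmax L c₀ cn c : ℝ} (hθ : θ ∈ thetaN' M Lmin Lmax L c₀ cn) (hM : 0 < M)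
    (hc : 0 < c) (hc1 : 2 * c ≤ 1) {t : Fin T} (hH : M / (2 * c) < D.H t)
    (hsparse : ∀ l r, Ico l r ⊆ Ico (Lmin - L) (Lmax + L) → r - l ≤ 2 * c →
      countIn X ω n (Ico l r) ≤ 6) :
    (countIn X ω n (Ico (D.l t) (D.r t)) : ℝ) / n * Real.log (D.H t)
      ≤ 3 * (2 / n * Real.log (D.H t)) := by
  have hM1 : (1 : ℝ) ≤ M := by exact_mod_cast hM
  have hlen : D.r t - D.l t ≤ 2 * c :=
    (D.length_lt_inv_of_lt_H hθ.1 (by positivity) hH).le.trans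
      (by rw [inv_div]; exact div_le_self (by positivity) hM1)
  have hlog : 0 ≤ Real.log (D.H t) :=
    Real.log_nonneg (((one_le_div (by positivity)).2 (hc1.trans hM1)).trans hH.le)
  have hcount : (countIn X ω n (Ico (D.l t) (D.r t)) : ℝ) ≤ 6 := by
    exact_mod_cast hsparse _ _ (D.Ico_subset hθ t) hlen
  calc (countIn X ω n (Ico (D.l t) (D.r t)) : ℝ) / n * Real.log (D.H t)
      ≤ 6 / n * Real.log (D.H t) := by gcongr
    _ = 3 * (2 / n * Real.log (D.H t)) := by ring

end StepDecomp

lemma countIn_mono {Ω : Type*} (X : ℕ → Ω → ℝ) (ω : Ω) (n : ℕ) {V W : Set ℝ} (h : V ⊆ W) :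
    countIn X ω n V ≤ countIn X ω n W :=
  Finset.card_le_card (Finset.monotone_filter_right _ fun _ _ hi => h hi)

lemma measure_le_countIn_le {Ω : Type*} [MeasurableSpace Ω] {P : Measure Ω} {X : ℕ → Ω → ℝ}
    {μ : Measure ℝ} (hX : ∀ i, Measurable (X i)) (hindep : iIndepFun X P)
    (hlaw : ∀ i, P.map (X i) = μ) (n k : ℕ) {V : Set ℝ} (hV : MeasurableSet V) :
    P {ω | k ≤ countIn X ω n V} ≤ n.choose k * μ V ^ k := by
  have hsub : {ω | k ≤ countIn X ω n V} ⊆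
      ⋃ s ∈ (Finset.range n).powersetCard k, ⋂ i ∈ s, X i ⁻¹' V := by
    intro ω hω
    obtain ⟨s, hs, hcard⟩ := Finset.exists_subset_card_eq hω
    refine Set.mem_biUnion (Finset.mem_powersetCard.2 ⟨hs.trans (Finset.filter_subset _ _), hcard⟩)
      (Set.mem_iInter₂.2 fun i hi => (Finset.mem_filter.1 (hs hi)).2)
  calc P {ω | k ≤ countIn X ω n V}
      ≤ ∑ s ∈ (Finset.range n).powersetCard k, P (⋂ i ∈ s, X i ⁻¹' V) :=
        (measure_mono hsub).trans (measure_biUnion_finset_le _ _)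
    _ = ∑ s ∈ (Finset.range n).powersetCard k, μ V ^ k := by
        refine Finset.sum_congr rfl fun s hs => ?_
        rw [hindep.meas_biInter fun i _ => ⟨V, hV, rfl⟩, ← (Finset.mem_powersetCard.1 hs).2,
          ← Finset.prod_const]
        exact Finset.prod_congr rfl fun i _ => by rw [← Measure.map_apply (hX i) hV, hlaw i]
    _ = n.choose k * μ V ^ k := by
        rw [Finset.sum_const, Finset.card_powersetCard, Finset.card_range, nsmul_eq_mul]

/-- Width `2 * ε` at mesh `ε`: every interval of length at most `ε` lies in one of them. -/
def gridIco (A ε : ℝ) (j : ℕ) : Set ℝ := Ico (A + j * ε) (A + (j + 2) * ε)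

lemma exists_Ico_subset_gridIco {A B ε l r : ℝ} (hε : 0 < ε) (hlr : l < r)
    (hsub : Ico l r ⊆ Ico A B) (hlen : r - l ≤ ε) :
    ∃ j < ⌊(B - A) / ε⌋₊ + 1, Ico l r ⊆ gridIco A ε j := by
  obtain ⟨hAl, hrB⟩ := (Set.Ico_subset_Ico_iff hlr).1 hsub
  refine ⟨⌊(l - A) / ε⌋₊, Nat.lt_succ_of_le (Nat.floor_le_floor (by gcongr; linarith)),
    (Set.Ico_subset_Ico_iff hlr).2 ⟨?_, ?_⟩⟩
  · have := Nat.floor_le (div_nonneg (sub_nonneg.2 hAl) hε.le)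
    rw [le_div_iff₀ hε] at this
    linarith
  · have := Nat.lt_floor_add_one ((l - A) / ε)
    rw [div_lt_iff₀ hε] at this
    linarith

section ShortIntervals

variable {Ω : Type*} [MeasurableSpace Ω] {P : Measure Ω} {X : ℕ → Ω → ℝ} {μ : Measure ℝ}
  {u A B : ℝ}

lemma measure_biUnion_gridIco_le (hX : ∀ i, Measurable (X i)) (hindep : iIndepFun X P)
    (hlaw : ∀ i, P.map (X i) = μ) (hu : 0 ≤ u)
    (hμ : ∀ a b, μ (Ico a b) ≤ ENNReal.ofReal (u * (b - a))) (hAB : A ≤ B)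
    {ε : ℝ} (hε : 0 < ε) (hε1 : ε ≤ 1) (n k : ℕ) :
    P (⋃ j ∈ Finset.range (⌊(B - A) / ε⌋₊ + 1),
        {ω | k + 1 ≤ countIn X ω n (gridIco A ε j)})
      ≤ ENNReal.ofReal ((B - A + 1) * (2 * u) ^ (k + 1) * ((n : ℝ) ^ (k + 1) * ε ^ k)) := by
  set N := ⌊(B - A) / ε⌋₊ + 1
  have hgrid : ∀ j, P {ω | k + 1 ≤ countIn X ω n (gridIco A ε j)}
      ≤ ENNReal.ofReal ((n : ℝ) ^ (k + 1) * (2 * u * ε) ^ (k + 1)) := fun j => by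
    refine (measure_le_countIn_le hX hindep hlaw n (k + 1) measurableSet_Ico).trans ?_
    rw [ENNReal.ofReal_mul (by positivity)]
    gcongr ?_ * ?_
    · rw [← ENNReal.ofReal_natCast]
      exact ENNReal.ofReal_le_ofReal (by exact_mod_cast Nat.choose_le_pow n (k + 1))
    · rw [ENNReal.ofReal_pow (by positivity)]
      gcongr
      exact (hμ _ _).trans (ENNReal.ofReal_le_ofReal (le_of_eq (by ring)))
  have hNε : (N : ℝ) * ε ≤ B - A + 1 := by
    have := Nat.floor_le (div_nonneg (sub_nonneg.2 hAB) hε.le)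
    rw [le_div_iff₀ hε] at this
    push_cast [N]
    linarith
  calc _ ≤ ∑ j ∈ Finset.range N, P {ω | k + 1 ≤ countIn X ω n (gridIco A ε j)} :=
        measure_biUnion_finset_le _ _
    _ ≤ ∑ _j ∈ Finset.range N, ENNReal.ofReal ((n : ℝ) ^ (k + 1) * (2 * u * ε) ^ (k + 1)) :=
        Finset.sum_le_sum fun j _ => hgrid j
    _ = ENNReal.ofReal (N * ε * ((2 * u) ^ (k + 1) * ((n : ℝ) ^ (k + 1) * ε ^ k))) := by
        rw [Finset.sum_const, Finset.card_range, nsmul_eq_mul, ← ENNReal.ofReal_natCast,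
          ← ENNReal.ofReal_mul (by positivity)]
        ring_nf
    _ ≤ _ := by
        rw [mul_assoc _ ((2 * u) ^ (k + 1))]
        gcongr

theorem ae_eventually_countIn_le (hX : ∀ i, Measurable (X i)) (hindep : iIndepFun X P)
    (hlaw : ∀ i, P.map (X i) = μ) (hu : 0 ≤ u)
    (hμ : ∀ a b, μ (Ico a b) ≤ ENNReal.ofReal (u * (b - a))) (hAB : A ≤ B) (k : ℕ)
    {ε : ℕ → ℝ} (hε : ∀ n, 0 < ε n) (hε1 : ∀ n, ε n ≤ 1)
    (hsum : Summable fun n : ℕ => (n : ℝ) ^ (k + 1) * ε n ^ k) :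
    ∀ᵐ ω ∂P, ∀ᶠ n in atTop, ∀ l r, Ico l r ⊆ Ico A B → r - l ≤ ε n →
      countIn X ω n (Ico l r) ≤ k := by
  set bad : ℕ → Set Ω := fun n => ⋃ j ∈ Finset.range (⌊(B - A) / ε n⌋₊ + 1),
    {ω | k + 1 ≤ countIn X ω n (gridIco A (ε n) j)}
  have hbad : ∑' n, P (bad n) ≠ ∞ :=
    ne_top_of_le_ne_top (hsum.mul_left ((B - A + 1) * (2 * u) ^ (k + 1))).tsum_ofReal_ne_top
      (ENNReal.tsum_le_tsum fun n =>
        measure_biUnion_gridIco_le hX hindep hlaw hu hμ hAB (hε n) (hε1 n) n k)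
  filter_upwards [ae_eventually_notMem hbad] with ω hω
  filter_upwards [hω] with n hn l r hsub hlen
  rcases le_or_gt r l with hrl | hlr
  · simp [countIn, Set.Ico_eq_empty (not_lt.2 hrl)]
  obtain ⟨j, hj, hlrj⟩ := exists_Ico_subset_gridIco (hε n) hlr hsub hlen
  have hj_few : ¬ k + 1 ≤ countIn X ω n (gridIco A (ε n) j) := fun h =>
    hn (Set.mem_biUnion (Finset.mem_range.2 hj) h)
  have := countIn_mono X ω n hlrj
  omega

end ShortIntervals

lemma summable_pow_mul_exp_neg_mul_rpow_quarter (k : ℕ) {c : ℝ} (hc : 0 < c) :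
    Summable fun n : ℕ => (n : ℝ) ^ k * Real.exp (-(c * (n : ℝ) ^ ((1 : ℝ) / 4))) := by
  set m := 4 * (k + 2)
  refine ((Real.summable_one_div_nat_pow.2 one_lt_two).mul_left
    (m.factorial / c ^ m)).of_norm_bounded_eventually_nat ?_
  filter_upwards [eventually_gt_atTop 0] with n hn
  rw [Real.norm_of_nonneg (by positivity)]
  have hn0 : (0 : ℝ) < n := by exact_mod_cast hn
  set s := (n : ℝ) ^ ((1 : ℝ) / 4)
  have hs : s ^ m = (n : ℝ) ^ (k + 2) := by
    rw [← Real.rpow_natCast, ← Real.rpow_mul hn0.le, ← Real.rpow_natCast]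
    congr 1
    push_cast [m]
    ring
  have hexp : Real.exp (-(c * s)) ≤ m.factorial / (c ^ m * (n : ℝ) ^ (k + 2)) := by
    rw [Real.exp_neg, inv_le_comm₀ (Real.exp_pos _) (by positivity), inv_div, ← hs, ← mul_pow]
    exact Real.pow_div_factorial_le_exp _ (by positivity) m
  calc (n : ℝ) ^ k * Real.exp (-(c * s))
      ≤ (n : ℝ) ^ k * (m.factorial / (c ^ m * (n : ℝ) ^ (k + 2))) := by gcongr
    _ = m.factorial / c ^ m * (1 / (n : ℝ) ^ 2) := by
        field_simp
        ring

lemma withDensity_Ico_le {f : ℝ → ℝ} {u : ℝ} (hf : ∀ x, f x ≤ u) (hu : 0 ≤ u) (a b : ℝ) :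
    volume.withDensity (fun x => ENNReal.ofReal (f x)) (Ico a b)
      ≤ ENNReal.ofReal (u * (b - a)) := by
  rw [withDensity_apply _ measurableSet_Ico, ENNReal.ofReal_mul hu, ← Real.volume_Ico,
    ← setLIntegral_const]
  exact lintegral_mono fun x => ENNReal.ofReal_le_ofReal (hf x)

-- If `u` is not eventually bounded below, `limsup u f` is `sInf` of a set unbounded below,
-- which is `0` by convention.
lemma limsup_nonpos_of_eventually_nonpos {α : Type*} {f : Filter α} {u : α → ℝ}
    (h : ∀ᶠ x in f, u x ≤ 0) : limsup u f ≤ 0 := by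
  rw [limsup_eq]
  by_cases hb : BddBelow {a | ∀ᶠ x in f, u x ≤ a}
  · exact csInf_le hb h
  · rw [Real.sInf_of_not_bddBelow hb]

theorem limsup_sup_high_intervals_le_zero_general
    (M K T τ : ℕ) (hM : 0 < M)
    (θ₀ : EuclideanSpace ℝ (Fin M × Fin 3)) (hθ₀ : θ₀ ∈ mixParams M)
    (Lmin Lmax L : ℝ)
    (u : ℝ) (hu : IsGreatest (Set.range (mixPdf M θ₀)) u)
    (c₀ d : ℝ) (hc₀ : 0 < c₀) (hc₀e : 2 * c₀ < Real.exp (-1))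
    {Ω : Type*} [MeasurableSpace Ω] (P : Measure Ω)
    (X : ℕ → Ω → ℝ) (hX : ∀ i, Measurable (X i))
    (hindep : iIndepFun X P)
    (hlaw : ∀ i, Measure.map (X i) P
      = volume.withDensity fun x => ENNReal.ofReal (mixPdf M θ₀ x)) :
    ∀ᵐ ω ∂P,
      Filter.limsup (fun n : ℕ =>
          sSup {y : ℝ |
            ∃ θ ∈ thetaNK M Lmin Lmax L c₀ (c₀ * Real.exp (-(n : ℝ) ^ d)) K,
            ∃ D : StepDecomp M θ T,
              tauEq D (c₀ * Real.exp (-(n : ℝ) ^ ((1 : ℝ) / 4))) τ ∧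
              y = (∑ t ∈ Finset.univ.filter (fun t : Fin T => τ ≤ (t : ℕ)),
                    (countIn X ω n (Set.Ico (D.l t) (D.r t)) : ℝ) / n
                      * Real.log (D.H t))
                - 3 * ∑ t ∈ Finset.univ.filter (fun t : Fin T => τ ≤ (t : ℕ)),
                    (2 / (n : ℝ)) * Real.log (D.H t)})
        atTop
      ≤ 0 := by
  obtain ⟨x₀, rfl⟩ := hu.1
  set c : ℕ → ℝ := fun n => c₀ * Real.exp (-(n : ℝ) ^ ((1 : ℝ) / 4))
  have hc1 : ∀ n, 2 * c n ≤ 1 := fun n => by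
    have := Real.exp_le_one_iff.2 (neg_nonpos.2 (Real.rpow_nonneg n.cast_nonneg ((1 : ℝ) / 4)))
    have := Real.exp_lt_one_iff.2 (neg_one_lt_zero (R := ℝ))
    simp only [c]
    nlinarith
  have hsum : Summable fun n : ℕ => (n : ℝ) ^ (6 + 1) * (2 * c n) ^ 6 := by
    refine ((summable_pow_mul_exp_neg_mul_rpow_quarter 7 (by norm_num : (0 : ℝ) < 6)).mul_left
      ((2 * c₀) ^ 6)).congr fun n => ?_
    simp only [c, mul_pow, ← Real.exp_nat_mul]
    ring_nf
  filter_upwards [ae_eventually_countIn_le hX hindep hlaw (mixPdf_nonneg hθ₀ x₀)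
    (withDensity_Ico_le (fun x => hu.2 ⟨x, rfl⟩) (mixPdf_nonneg hθ₀ x₀))
    (le_max_left (Lmin - L) (Lmax + L)) 6 (fun n => by positivity) hc1 hsum] with ω hω
  refine limsup_nonpos_of_eventually_nonpos (hω.mono fun n hn => Real.sSup_nonpos ?_)
  rintro _ ⟨θ, hθ, D, hτ, rfl⟩
  rw [sub_nonpos, Finset.mul_sum]
  refine Finset.sum_le_sum fun t ht => D.countIn_div_mul_log_le hθ.1 hM (by positivity) (hc1 n)
    (lt_of_not_ge fun h => (Finset.mem_filter.1 ht).2.not_gt ((hτ t).1 h))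
    fun l r hlr => hn l r (hlr.trans (Set.Ico_subset_Ico_right (le_max_right _ _)))

/-- **Lemma (high intervals).** For fixed `K`, `T ≤ 2M` and `1 ≤ τ ≤ T`, almost surely
`limsup_n sup_{θ ∈ Θ'_{n,K,T,τ}} [Σ_{t=τ+1}^T (1/n) R_n(J_t(θ)) log H(J_t(θ))
  − 3 Σ_{t=τ+1}^T (2/n) log H(J_t(θ))] ≤ 0`. -/
theorem limsup_sup_high_intervals_le_zero
    (M K T τ : ℕ) (hM : 0 < M) (hK1 : 1 ≤ K) (hKM : K ≤ M)
    (hT1 : 1 ≤ T) (hT2M : T ≤ 2 * M) (hτ1 : 1 ≤ τ) (hτT : τ ≤ T)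
    (θ₀ : EuclideanSpace ℝ (Fin M × Fin 3)) (hθ₀ : θ₀ ∈ mixParams M)
    (Lmin Lmax L : ℝ)
    (hLmin : IsLeast (Set.range fun m : Fin M => θ₀ (m, 1) - θ₀ (m, 2)) Lmin)
    (hLmax : IsGreatest (Set.range fun m : Fin M => θ₀ (m, 1) + θ₀ (m, 2)) Lmax)
    (hL : L = Lmax - Lmin)
    (u : ℝ) (hu : IsGreatest (Set.range (mixPdf M θ₀)) u)
    (c₀ d : ℝ) (hc₀ : 0 < c₀) (hc₀e : 2 * c₀ < Real.exp (-1))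
    (hd0 : 1 / 4 < d) (hd1 : d < 1)
    {Ω : Type*} [MeasurableSpace Ω] (P : Measure Ω) [IsProbabilityMeasure P]
    (X : ℕ → Ω → ℝ) (hX : ∀ i, Measurable (X i))
    (hindep : iIndepFun X P)
    (hlaw : ∀ i, Measure.map (X i) P
      = volume.withDensity fun x => ENNReal.ofReal (mixPdf M θ₀ x)) :
    ∀ᵐ ω ∂P,
      Filter.limsup (fun n : ℕ =>
          sSup {y : ℝ |
            ∃ θ ∈ thetaNK M Lmin Lmax L c₀ (c₀ * Real.exp (-(n : ℝ) ^ d)) K,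
            ∃ D : StepDecomp M θ T,
              tauEq D (c₀ * Real.exp (-(n : ℝ) ^ ((1 : ℝ) / 4))) τ ∧
              y = (∑ t ∈ Finset.univ.filter (fun t : Fin T => τ ≤ (t : ℕ)),
                    (countIn X ω n (Set.Ico (D.l t) (D.r t)) : ℝ) / n
                      * Real.log (D.H t))
                - 3 * ∑ t ∈ Finset.univ.filter (fun t : Fin T => τ ≤ (t : ℕ)),
                    (2 / (n : ℝ)) * Real.log (D.H t)})
        atTop
      ≤ 0 :=
  limsup_sup_high_intervals_le_zero_general M K T τ hM θ₀ hθ₀ Lmin Lmax L u hu c₀ d hc₀ hc₀e P X hX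
    hindep hlaw
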